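/- arXiv:1911.05907 — 12 statements merged into one kernel-verified Lean document; each statement's English description precedes it below -/
import Mathlib

section
/- Let W be a type of possible worlds and R a reflexive and transitive binary relation on W. Then there exists a priority graph G = (I, ≺, Φ) over W such that for all w, w' ∈ W, R w w' iff w ≤_G w'. Moreover, if W is finite, then the index set I can be chosen to be finite. -/
/-- The relation on worlds induced by a priority graph `(I, prec, Φ)`. -/
def inducedLe {W I : Type*} (prec : I → I → Prop) (Φ : I → Set W) (w w' : W) : Prop :=
  ∀ i : I, (w' ∈ Φ i → w ∈ Φ i) ∨ ∃ j : I, prec j i ∧ w ∈ Φ j ∧ w' ∉ Φ j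

/-- every reflexive and transitive relation `R` on a type of worlds `W`
is induced by some priority graph `(I, prec, Φ)` (with `prec` a strict partial order,
i.e. irreflexive and transitive); moreover, if `W` is finite, then the index set `I`
can be chosen to be finite. -/
theorem exists_priority_graph_inducing {W : Type} (R : W → W → Prop)
    (hrefl : Reflexive R) (htrans : Transitive R) :
    ∃ (I : Type) (prec : I → I → Prop) (Φ : I → Set W),
      (∀ i : I, ¬ prec i i) ∧
      (∀ i j k : I, prec i j → prec j k → prec i k) ∧
      (∀ w w' : W, R w w' ↔ inducedLe prec Φ w w') ∧
      (Finite W → Finite I) := by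
  refine ⟨W, fun _ _ => False, fun v => {w | R w v}, fun _ h => h, fun _ _ _ h => h.elim,
    fun w w' => ⟨fun h i => ?_, fun h => ?_⟩, fun h => h⟩
  · exact Or.inl (fun hw' => htrans h hw')
  · rcases h w' with hw | ⟨j, hj, _⟩
    · exact hw (hrefl w')
    · exact hj.elim
end

section
/- Let W be a type of possible worlds and let ≤_P and ≤_D be two preorders (reflexive and transitive relations) on W. Then there exist priority graphs G_P = (I_P, ≺_P, Φ_P) and G_D = (I_D, ≺_D, Φ_D) over W such that ≤_P coincides with the induced relation ≤_{G_P} and ≤_D coincides with the induced relation ≤_{G_D}. (Every agent model is induced by some agent structure.) -/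
lemma key {W : Type} (le : W → W → Prop) (hrefl : Reflexive le) (htrans : Transitive le)
    (w w' : W) : le w w' ↔ inducedLe (fun _ _ : W => False) (fun v => {u | le u v}) w w' := by
  constructor
  · intro h i
    exact Or.inl fun h' => htrans h h'
  · intro h
    rcases h w' with h' | ⟨j, hj, _⟩
    · exact h' (hrefl w')
    · exact hj.elim

/-- given two preorders `≤_P` (plausibility) and `≤_D` (desirability)
on a type of worlds `W` (i.e. an agent model), there exist priority graphs
`G_P = (I_P, prec_P, Φ_P)` and `G_D = (I_D, prec_D, Φ_D)` (each with a strict partial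
order on its index set) whose induced relations coincide with `≤_P` and `≤_D`
respectively: every agent model is induced by some agent structure. -/
theorem exists_agent_structure_inducing {W : Type}
    (leP leD : W → W → Prop)
    (hPrefl : Reflexive leP) (hPtrans : Transitive leP)
    (hDrefl : Reflexive leD) (hDtrans : Transitive leD) :
    ∃ (IP : Type) (precP : IP → IP → Prop) (ΦP : IP → Set W)
      (ID : Type) (precD : ID → ID → Prop) (ΦD : ID → Set W),
      (∀ i : IP, ¬ precP i i) ∧
      (∀ i j k : IP, precP i j → precP j k → precP i k) ∧
      (∀ i : ID, ¬ precD i i) ∧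
      (∀ i j k : ID, precD i j → precD j k → precD i k) ∧
      (∀ w w' : W, leP w w' ↔ inducedLe precP ΦP w w') ∧
      (∀ w w' : W, leD w w' ↔ inducedLe precD ΦD w w') := by
  exact ⟨W, fun _ _ => False, fun v => {u | leP u v},
         W, fun _ _ => False, fun v => {u | leD u v},
         fun _ h => h, fun _ _ _ h _ => h.elim,
         fun _ h => h, fun _ _ _ h _ => h.elim,
         key leP hPrefl hPtrans, key leD hDrefl hDtrans⟩
end

section
/- Let W be a type of possible worlds and G = (I, ≺, Φ) a priority graph over W with I finite. Then the strict part <_G of the induced relation ≤_G (defined by w <_G w' iff w ≤_G w' and not w' ≤_G w) is well-founded. -/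
lemma inducedLe_refl {W I : Type*} (prec : I → I → Prop) (Φ : I → Set W) (w : W) :
    inducedLe prec Φ w w := fun _ => Or.inl id

lemma inducedLe_trans {W I : Type*} (prec : I → I → Prop) (Φ : I → Set W)
    (hwf : WellFounded prec)
    (htrans : ∀ i j k : I, prec i j → prec j k → prec i k)
    {a b c : W} (hab : inducedLe prec Φ a b) (hbc : inducedLe prec Φ b c) :
    inducedLe prec Φ a c := by
  have key : ∀ j : I, ((a ∈ Φ j ∧ b ∉ Φ j) ∨ (b ∈ Φ j ∧ c ∉ Φ j)) →
      (a ∈ Φ j ∧ c ∉ Φ j) ∨ ∃ k, prec k j ∧ a ∈ Φ k ∧ c ∉ Φ k := by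
    intro j
    induction j using hwf.induction with
    | _ j ih =>
      rintro (⟨hja, hjb⟩ | ⟨hjb, hjc⟩)
      · rcases hbc j with h | ⟨l, hlj, hlb, hlc⟩
        · exact Or.inl ⟨hja, fun hc => hjb (h hc)⟩
        · rcases ih l hlj (Or.inr ⟨hlb, hlc⟩) with h | ⟨k, hkl, hk⟩
          · exact Or.inr ⟨l, hlj, h⟩
          · exact Or.inr ⟨k, htrans _ _ _ hkl hlj, hk⟩
      · rcases hab j with h | ⟨l, hlj, hla, hlb⟩
        · exact Or.inl ⟨h hjb, hjc⟩
        · rcases ih l hlj (Or.inl ⟨hla, hlb⟩) with h | ⟨k, hkl, hk⟩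
          · exact Or.inr ⟨l, hlj, h⟩
          · exact Or.inr ⟨k, htrans _ _ _ hkl hlj, hk⟩
  intro i
  rcases hab i with h1 | ⟨j, hji, hja, hjb⟩
  · rcases hbc i with h2 | ⟨j, hji, hjb, hjc⟩
    · exact Or.inl (fun hc => h1 (h2 hc))
    · rcases key j (Or.inr ⟨hjb, hjc⟩) with h | ⟨k, hkj, hk⟩
      · exact Or.inr ⟨j, hji, h⟩
      · exact Or.inr ⟨k, htrans _ _ _ hkj hji, hk⟩
  · rcases key j (Or.inl ⟨hja, hjb⟩) with h | ⟨k, hkj, hk⟩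
    · exact Or.inr ⟨j, hji, h⟩
    · exact Or.inr ⟨k, htrans _ _ _ hkj hji, hk⟩

/-- if the index set `I` of a priority graph is finite, then the strict
part of the induced relation `≤_G` (i.e. `w <_G w'` iff `w ≤_G w'` and not `w' ≤_G w`)
is well-founded. -/
theorem inducedLe_strict_wellFounded {W I : Type*} [Finite I]
    (prec : I → I → Prop) (Φ : I → Set W)
    (hirr : ∀ i : I, ¬ prec i i)
    (htrans : ∀ i j k : I, prec i j → prec j k → prec i k) :
    WellFounded (fun w w' : W =>
      inducedLe prec Φ w w' ∧ ¬ inducedLe prec Φ w' w) := by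
  have hwf : WellFounded prec := by
    have : IsTrans I prec := ⟨fun a b c => htrans a b c⟩
    have : IsIrrefl I prec := ⟨hirr⟩
    exact Finite.wellFounded_of_trans_of_irrefl prec
  -- transport everything to `Set I`, which is a finite type
  set Φ' : I → Set (Set I) := fun i => {s | i ∈ s} with hΦ'
  set f : W → Set I := fun w => {i | w ∈ Φ i} with hf
  have hR : WellFounded (fun s t : Set I =>
      inducedLe prec Φ' s t ∧ ¬ inducedLe prec Φ' t s) := by
    have : IsTrans (Set I) (fun s t => inducedLe prec Φ' s t ∧ ¬ inducedLe prec Φ' t s) :=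
      ⟨fun a b c ⟨h1, h2⟩ ⟨h3, h4⟩ =>
        ⟨inducedLe_trans prec Φ' hwf htrans h1 h3,
         fun h => h4 (inducedLe_trans prec Φ' hwf htrans h h1)⟩⟩
    have : IsIrrefl (Set I) (fun s t => inducedLe prec Φ' s t ∧ ¬ inducedLe prec Φ' t s) :=
      ⟨fun s ⟨h1, h2⟩ => h2 h1⟩
    exact Finite.wellFounded_of_trans_of_irrefl _
  exact InvImage.wf f hR
end

section
/- Let W be a type of possible worlds and G = (I, ≺, Φ) a priority graph over W such that I is finite and ≺ is a strict linear order on I (irreflexive, transitive, and trichotomous). Then the induced relation ≤_G is a total preorder on W: it is reflexive, transitive, and for all w, w' ∈ W, either w ≤_G w' or w' ≤_G w. -/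
/-- if the index set `I` of a priority graph is finite and the priority
relation `prec` is a strict linear order on `I` (irreflexive, transitive and
trichotomous), then the induced relation `≤_G` is a total preorder on `W`:
reflexive, transitive, and any two worlds are comparable. -/
theorem inducedLe_total_preorder {W I : Type*} [Finite I]
    (prec : I → I → Prop) (Φ : I → Set W)
    (hirr : ∀ i : I, ¬ prec i i)
    (htrans : ∀ i j k : I, prec i j → prec j k → prec i k)
    (htrich : ∀ i j : I, prec i j ∨ i = j ∨ prec j i) :
    Reflexive (inducedLe prec Φ) ∧ Transitive (inducedLe prec Φ) ∧
      (∀ w w' : W, inducedLe prec Φ w w' ∨ inducedLe prec Φ w' w) := by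
  have hwf : WellFounded prec := by
    have h1 : IsTrans I prec := ⟨htrans⟩
    have h2 : IsIrrefl I prec := ⟨hirr⟩
    exact Finite.wellFounded_of_trans_of_irrefl prec
  refine ⟨fun w i => Or.inl id, ?_, ?_⟩
  · -- transitivity
    intro w w' w'' h1 h2 i
    by_contra hcon
    push_neg at hcon
    obtain ⟨⟨hi2, hwi⟩, hno⟩ := hcon
    -- hi2 : w'' ∈ Φ i, hwi : w ∉ Φ i, hno : ∀ j, prec j i → w ∈ Φ j → w'' ∈ Φ j
    have hex : ∃ k, k ∈ {k | (prec k i ∨ k = i) ∧ w'' ∈ Φ k ∧ w' ∉ Φ k} := by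
      rcases h1 i with h | ⟨j, hj, hwj, hw'j⟩
      · exact ⟨i, Or.inr rfl, hi2, fun hw' => hwi (h hw')⟩
      · exact ⟨j, Or.inl hj, hno j hj hwj, hw'j⟩
    obtain ⟨k, hk, hmin⟩ := hwf.has_min _ hex
    obtain ⟨hki, hw''k, hw'k⟩ := hk
    rcases h2 k with h | ⟨l, hl, hw'l, hw''l⟩
    · exact hw'k (h hw''k)
    · have hli : prec l i := by
        rcases hki with h' | h'
        · exact htrans _ _ _ hl h'
        · exact h' ▸ hl
      have hwl : w ∉ Φ l := fun hw => hw''l (hno l hli hw)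
      rcases h1 l with h | ⟨m, hm, hwm, hw'm⟩
      · exact hwl (h hw'l)
      · have hmi : prec m i := htrans _ _ _ hm hli
        exact hmin m ⟨Or.inl hmi, hno m hmi hwm, hw'm⟩ (htrans _ _ _ hm hl)
  · -- totality
    intro w w'
    by_cases hD : ∀ i, w ∈ Φ i ↔ w' ∈ Φ i
    · exact Or.inl fun i => Or.inl fun h => (hD i).2 h
    · rw [not_forall] at hD
      obtain ⟨m, hm, hmin⟩ := hwf.has_min {i | ¬(w ∈ Φ i ↔ w' ∈ Φ i)} hD
      by_cases hwm : w ∈ Φ m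
      · have hw'm : w' ∉ Φ m := fun h => hm ⟨fun _ => h, fun _ => hwm⟩
        left
        intro i
        by_cases h : w' ∈ Φ i → w ∈ Φ i
        · exact Or.inl h
        · push_neg at h
          have hi : ¬(w ∈ Φ i ↔ w' ∈ Φ i) := fun hh => h.2 (hh.2 h.1)
          have hpmi : prec m i := by
            rcases htrich m i with h' | h' | h'
            · exact h'
            · exact absurd (h' ▸ hwm) h.2
            · exact absurd h' (hmin i hi)
          exact Or.inr ⟨m, hpmi, hwm, hw'm⟩
      · have hw'm : w' ∈ Φ m := by
          by_contra h
          exact hm ⟨fun h' => absurd h' hwm, fun h' => absurd h' h⟩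
        right
        intro i
        by_cases h : w ∈ Φ i → w' ∈ Φ i
        · exact Or.inl h
        · push_neg at h
          have hi : ¬(w ∈ Φ i ↔ w' ∈ Φ i) := fun hh => h.2 (hh.1 h.1)
          have hpmi : prec m i := by
            rcases htrich m i with h' | h' | h'
            · exact h'
            · exact absurd (h' ▸ hw'm) h.2
            · exact absurd h' (hmin i hi)
          exact Or.inr ⟨m, hpmi, hw'm, hwm⟩
end

section
/- Let W be a set of possible worlds, ≤ a preorder on W whose strict part < is well-founded, and A ⊆ W. Then the strict part of the radical upgrade ≤_{⇑A} (defined by w <_{⇑A} w' iff w ≤_{⇑A} w' and not w' ≤_{⇑A} w) is well-founded. -/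
/-- The radical upgrade of a relation `le` on worlds by a set `A` of worlds. -/
def radicalUpgrade {W : Type*} (le : W → W → Prop) (A : Set W) (w w' : W) : Prop :=
  (w ∈ A ∧ w' ∉ A) ∨ (le w w' ∧ ¬ (w ∉ A ∧ w' ∈ A))

/-- if the strict part of a preorder `le` is well-founded, then the
strict part of the radical upgrade of `le` by any set `A` is also well-founded. -/
theorem radicalUpgrade_strict_wellFounded {W : Type*} (le : W → W → Prop) (A : Set W)
    (hrefl : Reflexive le) (htrans : Transitive le)
    (hwf : WellFounded (fun w w' : W => le w w' ∧ ¬ le w' w)) :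
    WellFounded (fun w w' : W =>
      radicalUpgrade le A w w' ∧ ¬ radicalUpgrade le A w' w) := by
  classical
  set r := fun w w' : W => radicalUpgrade le A w w' ∧ ¬ radicalUpgrade le A w' w with hr
  have key : ∀ w w', r w w' →
      (w ∈ A ∧ w' ∉ A) ∨ ((le w w' ∧ ¬ le w' w) ∧ (w ∈ A ↔ w' ∈ A)) := by
    rintro w w' ⟨h1, h2⟩
    by_cases hw : w ∈ A <;> by_cases hw' : w' ∈ A <;>
      simp [radicalUpgrade, hw, hw'] at h1 h2 ⊢ <;> tauto
  have accA : ∀ w, w ∈ A → Acc r w := by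
    intro w
    induction w using hwf.induction with
    | _ w ih =>
      intro hw
      constructor
      intro y hy
      rcases key y w hy with ⟨_, hwA⟩ | ⟨hlt, hiff⟩
      · exact absurd hw hwA
      · exact ih y hlt (hiff.mpr hw)
  have accAll : ∀ w, Acc r w := by
    intro w
    induction w using hwf.induction with
    | _ w ih =>
      by_cases hw : w ∈ A
      · exact accA w hw
      · constructor
        intro y hy
        rcases key y w hy with ⟨hyA, _⟩ | ⟨hlt, _⟩
        · exact accA y hyA
        · exact ih y hlt
  exact ⟨accAll⟩
end

section
/- Let W be a set of possible worlds, ≤ a preorder on W, and A ⊆ W a nonempty set. Then the minimal worlds of W under the radical upgrade ≤_{⇑A} are exactly the minimal A-worlds under ≤: Min_{≤_{⇑A}}(W) = Min_≤(A). (Success of radical upgrade: after radically upgrading by φ, the agent believes φ.) -/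
/-- The minimal elements of a set `S` with respect to (the strict part of) `le`. -/
def MinSet {W : Type*} (le : W → W → Prop) (S : Set W) : Set W :=
  {w ∈ S | ¬ ∃ w' ∈ S, le w' w ∧ ¬ le w w'}

/-- success of radical upgrade: for a preorder `le` and a nonempty set
`A` of worlds, the minimal worlds under the radical upgrade of `le` by `A` are exactly
the minimal `A`-worlds under `le`. -/
theorem radicalUpgrade_success {W : Type*} (le : W → W → Prop) (A : Set W)
    (hrefl : Reflexive le) (htrans : Transitive le)
    (hA : A.Nonempty) :
    MinSet (radicalUpgrade le A) Set.univ = MinSet le A := by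
  ext w
  simp only [MinSet, radicalUpgrade, Set.mem_setOf_eq, Set.mem_univ, true_and]
  constructor
  · rintro hmin
    have hwA : w ∈ A := by
      by_contra hw
      obtain ⟨a, ha⟩ := hA
      exact hmin ⟨a, Or.inl ⟨ha, hw⟩,
        fun h => h.elim (fun ⟨h1, _⟩ => hw h1) (fun ⟨_, h2⟩ => h2 ⟨hw, ha⟩)⟩
    refine ⟨hwA, fun ⟨w', hw'A, hle, hnle⟩ => ?_⟩
    exact hmin ⟨w', Or.inr ⟨hle, fun h => h.1 hw'A⟩,
      fun h => h.elim (fun ⟨_, h2⟩ => h2 hw'A) (fun ⟨h1, _⟩ => hnle h1)⟩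
  · rintro ⟨hwA, hmin⟩ ⟨w', hR, hnR⟩
    rcases hR with ⟨_, hw⟩ | ⟨hle, hside⟩
    · exact hw hwA
    · have hw'A : w' ∈ A := by
        by_contra hw'
        exact hside ⟨hw', hwA⟩
      have : le w w' := by
        by_contra hn
        exact hmin ⟨w', hw'A, hle, hn⟩
      exact hnR (Or.inr ⟨this, fun h => h.1 hwA⟩)
end

section
/- Let W be a set of possible worlds, ≤ a preorder on W, and A, B ⊆ W. If A ∩ B ≠ ∅, then Min_{≤_{⇑A}}(B) = Min_≤(A ∩ B); if A ∩ B = ∅, then Min_{≤_{⇑A}}(B) = Min_≤(B). (Reduction of conditional belief after radical upgrade.) -/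
/-- reduction of conditional belief after radical upgrade: for a
preorder `le` and sets `A, B` of worlds, if `A ∩ B` is nonempty then the `B`-minimal
worlds after radical upgrade by `A` are the `le`-minimal worlds of `A ∩ B`; and if
`A ∩ B` is empty, they are the `le`-minimal worlds of `B`. -/
theorem radicalUpgrade_conditional {W : Type*} (le : W → W → Prop) (A B : Set W)
    (hrefl : Reflexive le) (htrans : Transitive le) :
    ((A ∩ B).Nonempty → MinSet (radicalUpgrade le A) B = MinSet le (A ∩ B)) ∧
    (A ∩ B = ∅ → MinSet (radicalUpgrade le A) B = MinSet le B) := by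
  constructor
  · rintro ⟨a, haA, haB⟩
    ext w
    simp only [MinSet, radicalUpgrade, Set.mem_inter_iff, Set.mem_setOf_eq]
    constructor
    · rintro ⟨hwB, hmin⟩
      have hwA : w ∈ A := by
        by_contra hwA
        exact hmin ⟨a, haB, Or.inl ⟨haA, hwA⟩, by tauto⟩
      refine ⟨⟨hwA, hwB⟩, ?_⟩
      rintro ⟨w', ⟨hw'A, hw'B⟩, hlt, hnle⟩
      exact hmin ⟨w', hw'B, Or.inr ⟨hlt, by tauto⟩, by tauto⟩
    · rintro ⟨⟨hwA, hwB⟩, hmin⟩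
      refine ⟨hwB, ?_⟩
      rintro ⟨w', hw'B, hR, hnR⟩
      have h1 : le w' w ∧ ¬ (w' ∉ A ∧ w ∈ A) := by tauto
      have hw'A : w' ∈ A := by tauto
      have h2 : ¬ le w w' := by tauto
      exact hmin ⟨w', ⟨hw'A, hw'B⟩, h1.1, h2⟩
  · intro hempty
    have hdisj : ∀ x, x ∈ B → x ∉ A := by
      intro x hxB hxA
      exact absurd (Set.mem_inter hxA hxB) (by simp [hempty])
    ext w
    simp only [MinSet, radicalUpgrade, Set.mem_setOf_eq]
    constructor
    · rintro ⟨hwB, hmin⟩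
      refine ⟨hwB, ?_⟩
      rintro ⟨w', hw'B, hle, hnle⟩
      have hwA := hdisj w hwB
      have hw'A := hdisj w' hw'B
      exact hmin ⟨w', hw'B, Or.inr ⟨hle, by tauto⟩, by tauto⟩
    · rintro ⟨hwB, hmin⟩
      refine ⟨hwB, ?_⟩
      rintro ⟨w', hw'B, hR, hnR⟩
      have hwA := hdisj w hwB
      have hw'A := hdisj w' hw'B
      have hle : le w' w := by tauto
      have hnle : ¬ le w w' := by tauto
      exact hmin ⟨w', hw'B, hle, hnle⟩
end

section
/- Let W be a type of possible worlds, G = (I, ≺, Φ) a priority graph over W, and A ⊆ W. Define the priority graph G' = (Option I, ≺', Φ') where Φ'(none) = A, Φ'(some i) = Φ i, and j ≺' i iff (j = none and i = some i₀ for some i₀ ∈ I) or (j = some j₀, i = some i₀, and j₀ ≺ i₀). Then the relation induced by G' is exactly the radical upgrade of the relation induced by G: for all w, w' ∈ W, w ≤_{G'} w' iff w (≤_G)_{⇑A} w'. (The radical upgrade operation on preference models is definable as an operation on priority graphs: prefixing the announced formula as a new highest-priority node.) -/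
/-- The priority order of the graph `G'` obtained from `G = (I, prec, Φ)` by prefixing
a new node (`none`) above all original nodes: `j ≺' i` iff `j = none` and `i` is an
original node, or both are original nodes `j₀ ≺ i₀`. -/
def prefixPrec {I : Type*} (prec : I → I → Prop) (j i : Option I) : Prop :=
  (j = none ∧ ∃ i₀ : I, i = some i₀) ∨
  (∃ j₀ i₀ : I, j = some j₀ ∧ i = some i₀ ∧ prec j₀ i₀)

/-- The assignment of the prefixed graph: the new node `none` carries the announced
set `A`, the original nodes keep their sets. -/
def prefixPhi {W I : Type*} (Φ : I → Set W) (A : Set W) : Option I → Set W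
  | none => A
  | some i => Φ i

section PrefixedGraph

variable {W I : Type*} (prec : I → I → Prop)

@[simp]
lemma prefixPrec_none_right (j : Option I) : ¬ prefixPrec prec j none := by
  simp [prefixPrec]

@[simp]
lemma prefixPrec_none_some (i : I) : prefixPrec prec none (some i) :=
  Or.inl ⟨rfl, i, rfl⟩

@[simp]
lemma prefixPrec_some_some (j i : I) : prefixPrec prec (some j) (some i) ↔ prec j i := by
  simp [prefixPrec]

/-- The first conjunct is the condition at the new top node; at an original node the
comparison may also be decided by the top node `A`. -/
lemma inducedLe_prefix_iff (Φ : I → Set W) (A : Set W) (w w' : W) :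
    inducedLe (prefixPrec prec) (prefixPhi Φ A) w w' ↔
      (w' ∈ A → w ∈ A) ∧ ((w ∈ A ∧ w' ∉ A) ∨ inducedLe prec Φ w w') := by
  simp only [inducedLe, Option.forall, Option.exists, prefixPhi, prefixPrec_none_right,
    prefixPrec_none_some, prefixPrec_some_some, false_and, true_and, exists_false, or_false,
    or_left_comm (a := _ ∈ Φ _ → _), forall_or_left]

end PrefixedGraph

theorem inducedLe_prefix_eq_radicalUpgrade_general {W I : Type*}
    (prec : I → I → Prop) (Φ : I → Set W) (A : Set W) :
    ∀ w w' : W,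
      inducedLe (prefixPrec prec) (prefixPhi Φ A) w w' ↔
        radicalUpgrade (inducedLe prec Φ) A w w' := by
  intro w w'
  rw [inducedLe_prefix_iff, radicalUpgrade]
  tauto

/-- radical upgrade on preference models is definable on priority graphs
by prefixing the announced formula as a new highest-priority node: the relation induced
by the prefixed graph `G'` is exactly the radical upgrade by `A` of the relation
induced by `G`. -/
theorem inducedLe_prefix_eq_radicalUpgrade {W I : Type*}
    (prec : I → I → Prop) (Φ : I → Set W) (A : Set W)
    (hirr : ∀ i : I, ¬ prec i i)
    (htrans : ∀ i j k : I, prec i j → prec j k → prec i k) :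
    ∀ w w' : W,
      inducedLe (prefixPrec prec) (prefixPhi Φ A) w w' ↔
        radicalUpgrade (inducedLe prec Φ) A w w' :=
  inducedLe_prefix_eq_radicalUpgrade_general prec Φ A
end

section
/- Let W be a set of possible worlds, ≤ a total preorder on W (reflexive, transitive, and for all w, w', w ≤ w' or w' ≤ w) whose strict part is well-founded, and A ⊆ W. Then the natural contraction ≤_{↓A} of ≤ by A is again a total preorder on W: it is reflexive, transitive, and total. -/
/-- The natural contraction of a relation `le` on worlds by a set `A` of worlds:
`w ≤_{↓A} w'` iff `w` is `le`-minimal in `W`, or `w` is `le`-minimal in `W \ A`, or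
(`w ≤ w'` and `w'` is not `le`-minimal in `W \ A`). -/
def naturalContraction {W : Type*} (le : W → W → Prop) (A : Set W) (w w' : W) : Prop :=
  w ∈ MinSet le Set.univ ∨ w ∈ MinSet le Aᶜ ∨ (le w w' ∧ w' ∉ MinSet le Aᶜ)

/-- the natural contraction of a total preorder with well-founded strict
part by a set `A` is again a total preorder: reflexive, transitive and total. -/
theorem naturalContraction_total_preorder {W : Type*} (le : W → W → Prop) (A : Set W)
    (hrefl : Reflexive le) (htrans : Transitive le)
    (htotal : ∀ w w' : W, le w w' ∨ le w' w)
    (hwf : WellFounded (fun w w' : W => le w w' ∧ ¬ le w' w)) :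
    Reflexive (naturalContraction le A) ∧ Transitive (naturalContraction le A) ∧
      (∀ w w' : W, naturalContraction le A w w' ∨ naturalContraction le A w' w) := by
  refine ⟨?_, ?_, ?_⟩
  · intro w
    by_cases h : w ∈ MinSet le Aᶜ
    · exact Or.inr (Or.inl h)
    · exact Or.inr (Or.inr ⟨hrefl w, h⟩)
  · intro w x y hwx hxy
    rcases hwx with h | h | ⟨hle, hx⟩
    · exact Or.inl h
    · exact Or.inr (Or.inl h)
    · rcases hxy with h2 | h2 | ⟨hle2, hy⟩
      · left
        refine ⟨trivial, ?_⟩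
        rintro ⟨z, -, hzw, hwz⟩
        exact h2.2 ⟨z, trivial, htrans hzw hle, fun hxz => hwz (htrans hle hxz)⟩
      · exact absurd h2 hx
      · exact Or.inr (Or.inr ⟨htrans hle hle2, hy⟩)
  · intro w w'
    by_cases h1 : w ∈ MinSet le Aᶜ
    · exact Or.inl (Or.inr (Or.inl h1))
    by_cases h2 : w' ∈ MinSet le Aᶜ
    · exact Or.inr (Or.inr (Or.inl h2))
    rcases htotal w w' with h | h
    · exact Or.inl (Or.inr (Or.inr ⟨h, h2⟩))
    · exact Or.inr (Or.inr (Or.inr ⟨h, h1⟩))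
end

section
/- Let W be a set of possible worlds, ≤ a preorder on W whose strict part is well-founded, and A ⊆ W. Then every w ∈ Min_≤(W \ A) satisfies w ≤_{↓A} w' for all w' ∈ W, and hence every element of Min_≤(W \ A) belongs to Min_{≤_{↓A}}(W). Consequently, if W \ A ≠ ∅, then Min_{≤_{↓A}}(W) ∩ (W \ A) ≠ ∅. (Success of natural contraction: after contracting by φ, the agent no longer believes φ.) -/
/-- success of natural contraction: for a preorder `le` with
well-founded strict part and a set `A` of worlds, every `le`-minimal world of `W \ A`
is `≤_{↓A}`-below every world, hence belongs to the `≤_{↓A}`-minimal worlds of `W`;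
consequently, if `W \ A` is nonempty, some `≤_{↓A}`-minimal world lies outside `A`. -/
theorem naturalContraction_success {W : Type*} (le : W → W → Prop) (A : Set W)
    (hrefl : Reflexive le) (htrans : Transitive le)
    (hwf : WellFounded (fun w w' : W => le w w' ∧ ¬ le w' w)) :
    (∀ w ∈ MinSet le Aᶜ, ∀ w' : W, naturalContraction le A w w') ∧
    MinSet le Aᶜ ⊆ MinSet (naturalContraction le A) Set.univ ∧
    (Aᶜ.Nonempty → (MinSet (naturalContraction le A) Set.univ ∩ Aᶜ).Nonempty) := by
  have h1 : ∀ w ∈ MinSet le Aᶜ, ∀ w' : W, naturalContraction le A w w' := by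
    intro w hw w'
    exact Or.inr (Or.inl hw)
  have h2 : MinSet le Aᶜ ⊆ MinSet (naturalContraction le A) Set.univ := by
    intro w hw
    refine ⟨Set.mem_univ w, ?_⟩
    rintro ⟨w', -, -, hnc⟩
    exact hnc (h1 w hw w')
  refine ⟨h1, h2, ?_⟩
  intro hne
  obtain ⟨m, hm, hmin⟩ := hwf.has_min Aᶜ hne
  have hmem : m ∈ MinSet le Aᶜ := by
    refine ⟨hm, ?_⟩
    rintro ⟨x, hx, hle, hnle⟩
    exact hmin x hx ⟨hle, hnle⟩
  exact ⟨m, h2 hmem, hm⟩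
end

section
/- Let W be a nonempty set of possible worlds, ≤ a total preorder on W (reflexive, transitive, and for all w, w', w ≤ w' or w' ≤ w) whose strict part is well-founded, and A ⊆ W. Then the minimal worlds after natural contraction by A are exactly the previously minimal worlds together with the minimal worlds outside A: Min_{≤_{↓A}}(W) = Min_≤(W) ∪ Min_≤(W \ A). -/
/-- for a nonempty type of worlds `W`, a total preorder `le` with
well-founded strict part, and a set `A` of worlds, the minimal worlds after natural
contraction by `A` are exactly the previously minimal worlds together with the
`le`-minimal worlds outside `A`. -/
theorem naturalContraction_minSet {W : Type*} [Nonempty W]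
    (le : W → W → Prop) (A : Set W)
    (hrefl : Reflexive le) (htrans : Transitive le)
    (htotal : ∀ w w' : W, le w w' ∨ le w' w)
    (hwf : WellFounded (fun w w' : W => le w w' ∧ ¬ le w' w)) :
    MinSet (naturalContraction le A) Set.univ = MinSet le Set.univ ∪ MinSet le Aᶜ := by
  ext w
  simp only [Set.mem_union]
  constructor
  · intro hw
    by_contra h
    push_neg at h
    obtain ⟨hM, hN⟩ := h
    obtain ⟨m, -, hm⟩ := hwf.has_min Set.univ ⟨Classical.arbitrary W, trivial⟩
    have hmM : m ∈ MinSet le Set.univ :=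
      ⟨trivial, fun ⟨x, _, hx⟩ => hm x trivial hx⟩
    obtain ⟨-, hmin⟩ := hw
    apply hmin
    refine ⟨m, trivial, Or.inl hmM, ?_⟩
    intro hRwm
    rcases hRwm with h1 | h1 | ⟨hlwm, hmN⟩
    · exact hM h1
    · exact hN h1
    · have : ∃ u, le u w ∧ ¬ le w u := by
        by_contra hc
        push_neg at hc
        exact hM ⟨trivial, fun ⟨u, _, hu1, hu2⟩ => hu2 (hc u hu1)⟩
      obtain ⟨u, hu1, hu2⟩ := this
      exact hmM.2 ⟨u, trivial, htrans hu1 hlwm, fun hmu => hu2 (htrans hlwm hmu)⟩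
  · intro hw
    refine ⟨trivial, ?_⟩
    rintro ⟨w', -, -, hnR⟩
    rcases hw with h | h
    · exact hnR (Or.inl h)
    · exact hnR (Or.inr (Or.inl h))
end

section
/- For every formula χ of the dynamic language L≤! (preference logic extended with public announcement modalities), there exists a formula χ' of the static language L≤ such that for every preference model M = (W, ≤, v) and every world w ∈ W, M, w ⊨ χ iff M, w ⊨ χ'. (Public announcement adds no expressive power to Preference Logic.) -/
/-- Propositional formulas over atoms `P`. -/
inductive Form0 (P : Type) : Type
  | atom : P → Form0 P
  | neg : Form0 P → Form0 P
  | and : Form0 P → Form0 P → Form0 P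

/-- The dynamic language `L≤!`: preference logic (atoms, ¬, ∧, the universal modality
`A`, `[≤]`, `[<]`) extended with public announcement modalities `[!φ₀]ψ` for
propositional `φ₀`. -/
inductive Form (P : Type) : Type
  | atom : P → Form P
  | neg : Form P → Form P
  | and : Form P → Form P → Form P
  | all : Form P → Form P
  | boxle : Form P → Form P
  | boxlt : Form P → Form P
  | ann : Form0 P → Form P → Form P

/-- A formula of the dynamic language is static (belongs to `L≤`) iff it contains no
announcement modality. -/
def Form.isStatic {P : Type} : Form P → Prop
  | .atom _ => True
  | .neg φ => φ.isStatic
  | .and φ ψ => φ.isStatic ∧ ψ.isStatic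
  | .all φ => φ.isStatic
  | .boxle φ => φ.isStatic
  | .boxlt φ => φ.isStatic
  | .ann _ _ => False

/-- A preference model: worlds, a reflexive transitive relation, and a valuation. -/
structure PrefModel (P : Type) where
  W : Type
  le : W → W → Prop
  refl : Reflexive le
  trans : Transitive le
  v : P → Set W

/-- Satisfaction of propositional formulas (depends only on the valuation). -/
def sat0 {P W : Type} (v : P → Set W) (w : W) : Form0 P → Prop
  | .atom p => w ∈ v p
  | .neg φ => ¬ sat0 v w φ
  | .and φ ψ => sat0 v w φ ∧ sat0 v w ψ

/-- The model `M_{!φ₀}` resulting from publicly announcing the propositional formula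
`φ₀` in `M`: the worlds are those satisfying `φ₀`, with `le` and `v` restricted. -/
def PrefModel.announce {P : Type} (M : PrefModel P) (φ₀ : Form0 P) : PrefModel P where
  W := {w : M.W // sat0 M.v w φ₀}
  le := fun w w' => M.le w.val w'.val
  refl := fun w => M.refl w.val
  trans := fun _ _ _ h h' => M.trans h h'
  v := fun p => {w | w.val ∈ M.v p}

/-- Satisfaction for the dynamic language `L≤!`. -/
def sat {P : Type} : (M : PrefModel P) → M.W → Form P → Prop
  | M, w, .atom p => w ∈ M.v p
  | M, w, .neg φ => ¬ sat M w φ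
  | M, w, .and φ ψ => sat M w φ ∧ sat M w ψ
  | M, _, .all φ => ∀ w' : M.W, sat M w' φ
  | M, w, .boxle φ => ∀ w' : M.W, M.le w' w → sat M w' φ
  | M, w, .boxlt φ => ∀ w' : M.W, (M.le w' w ∧ ¬ M.le w w') → sat M w' φ
  | M, w, .ann φ₀ ψ => ∀ h : sat0 M.v w φ₀, sat (M.announce φ₀) ⟨w, h⟩ ψ

/-!
Announcing a propositional `φ₀` keeps the `φ₀`-worlds with the restricted order, and the
truth of `φ₀` itself does not change. Hence `[!φ₀]ψ` is equivalent to `φ₀ → ψ^φ₀`, where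
the relativization `ψ^φ₀` of a static `ψ` guards every modality by `φ₀`; this works for `[<]`
as well, because the strict part of a restricted preorder is the restriction of the strict
part. Eliminating announcements innermost first yields the static equivalent.
-/

namespace Form

variable {P : Type}

def imp (φ ψ : Form P) : Form P := .neg (.and φ (.neg ψ))

@[simp]
lemma sat_imp (M : PrefModel P) (w : M.W) (φ ψ : Form P) :
    sat M w (φ.imp ψ) ↔ (sat M w φ → sat M w ψ) := by
  simp only [imp, sat, not_and, not_not]

end Form

def Form0.toForm {P : Type} : Form0 P → Form P
  | .atom p => .atom p
  | .neg φ => .neg φ.toForm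
  | .and φ ψ => .and φ.toForm ψ.toForm

namespace Form0

variable {P : Type}

lemma isStatic_toForm (α : Form0 P) : α.toForm.isStatic := by
  induction α <;> simp_all [toForm, Form.isStatic]

@[simp]
lemma sat_toForm (M : PrefModel P) (w : M.W) (α : Form0 P) :
    sat M w α.toForm ↔ sat0 M.v w α := by
  induction α <;> simp_all [toForm, sat, sat0]

end Form0

namespace Form

variable {P : Type}

/-- The `ann` clause is arbitrary: relativization is only meaningful on static formulas. -/
def relativize (α : Form0 P) : Form P → Form P
  | .atom p => .atom p
  | .neg φ => .neg (φ.relativize α)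
  | .and φ ψ => .and (φ.relativize α) (ψ.relativize α)
  | .all φ => .all (α.toForm.imp (φ.relativize α))
  | .boxle φ => .boxle (α.toForm.imp (φ.relativize α))
  | .boxlt φ => .boxlt (α.toForm.imp (φ.relativize α))
  | .ann β ψ => .ann β ψ

lemma isStatic_relativize (α : Form0 P) {φ : Form P} (h : φ.isStatic) :
    (φ.relativize α).isStatic := by
  induction φ <;> simp_all [relativize, isStatic, imp, Form0.isStatic_toForm]

lemma sat_announce_iff_sat_relativize (α : Form0 P) {φ : Form P} (h : φ.isStatic)
    (M : PrefModel P) (w : M.W) (hw : sat0 M.v w α) :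
    sat (M.announce α) ⟨w, hw⟩ φ ↔ sat M w (φ.relativize α) := by
  induction φ generalizing w with
  | atom p => rfl
  | neg φ ih => simp only [sat, relativize, ih h]
  | and φ ψ ihφ ihψ => simp only [sat, relativize, ihφ h.1, ihψ h.2]
  | all φ ih =>
    simp only [sat, relativize, sat_imp, Form0.sat_toForm]
    exact ⟨fun H w' hw' => (ih h w' hw').1 (H ⟨w', hw'⟩),
      fun H w' => (ih h w'.1 w'.2).2 (H w'.1 w'.2)⟩
  | boxle φ ih =>
    simp only [sat, relativize, sat_imp, Form0.sat_toForm]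
    exact ⟨fun H w' hle hw' => (ih h w' hw').1 (H ⟨w', hw'⟩ hle),
      fun H w' hle => (ih h w'.1 w'.2).2 (H w'.1 hle w'.2)⟩
  | boxlt φ ih =>
    simp only [sat, relativize, sat_imp, Form0.sat_toForm]
    exact ⟨fun H w' hlt hw' => (ih h w' hw').1 (H ⟨w', hw'⟩ hlt),
      fun H w' hlt => (ih h w'.1 w'.2).2 (H w'.1 hlt w'.2)⟩
  | ann β ψ => exact h.elim

def reduce : Form P → Form P
  | .atom p => .atom p
  | .neg φ => .neg φ.reduce
  | .and φ ψ => .and φ.reduce ψ.reduce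
  | .all φ => .all φ.reduce
  | .boxle φ => .boxle φ.reduce
  | .boxlt φ => .boxlt φ.reduce
  | .ann α ψ => α.toForm.imp (ψ.reduce.relativize α)

lemma isStatic_reduce (φ : Form P) : φ.reduce.isStatic := by
  induction φ <;>
    simp_all [reduce, isStatic, imp, Form0.isStatic_toForm, isStatic_relativize]

lemma sat_reduce (M : PrefModel P) (w : M.W) (φ : Form P) :
    sat M w φ.reduce ↔ sat M w φ := by
  induction φ generalizing M w with
  | ann α ψ ih =>
    simp only [reduce, sat_imp, Form0.sat_toForm, sat]
    exact forall_congr' fun hw =>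
      (sat_announce_iff_sat_relativize α (isStatic_reduce ψ) M w hw).symm.trans (ih _ _)
  | _ => simp_all [reduce, sat]

end Form

/-- public announcement adds no expressive power to preference logic.
For every formula `χ` of the dynamic language `L≤!` there is a static formula `χ'`
of `L≤` equivalent to it in every preference model at every world. -/
theorem announcement_reduction {P : Type} (χ : Form P) :
    ∃ χ' : Form P, χ'.isStatic ∧
      ∀ (M : PrefModel P) (w : M.W), sat M w χ ↔ sat M w χ' :=
  ⟨χ.reduce, χ.isStatic_reduce, fun M w => (Form.sat_reduce M w χ).symm⟩
end
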